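/- arXiv:2405.17101 — 10 statements merged into one kernel-verified Lean document; each statement's English description precedes it below -/
import Mathlib

section
/- Let ⟨W,R⟩ be a directed graph, n ∈ ℕ, and u an ultrafilter on W. If {w ∈ W : deg⁺(w) ≤ n} ∈ u, then deg⁺(u) ≤ n, i.e. u has at most n distinct R^ue-successors in the ultrafilter extension. -/
/-!
Distinct ultrafilters are disjoint filters, so finitely many successors `v₁, …, vₖ` of `u` have
pairwise disjoint members `Xᵢ ∈ vᵢ`. Then `⋂ᵢ R⁻(Xᵢ) ∈ u` meets `{w : deg⁺(w) ≤ n}`, and a point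
`w` of the intersection has a successor in each `Xᵢ`, hence `k ≤ deg⁺(w) ≤ n`.
-/

open Set Filter FirstOrder Language

/-- `R⁻(X)`: the set of elements having an `R`-successor in `X`. -/
def Rminus {W : Type*} (R : W → W → Prop) (X : Set W) : Set W := {w | ∃ s ∈ X, R w s}

/-- `R⁺(X)`: the set of elements having an `R`-predecessor in `X`. -/
def Rplus {W : Type*} (R : W → W → Prop) (X : Set W) : Set W := {s | ∃ w ∈ X, R w s}

/-- The relation of the ultrafilter extension: `R^ue u v ↔ ∀ X ∈ v, R⁻(X) ∈ u`. -/
def ueRel {W : Type*} (R : W → W → Prop) (u v : Ultrafilter W) : Prop :=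
  ∀ X ∈ v, Rminus R X ∈ u

/-- Out-degree `deg⁺(w)`, as an extended natural number. -/
noncomputable def degPlus {W : Type*} (R : W → W → Prop) (w : W) : ℕ∞ := {v | R w v}.encard

/-- In-degree `deg⁻(w)`, as an extended natural number. -/
noncomputable def degMinus {W : Type*} (R : W → W → Prop) (w : W) : ℕ∞ := {v | R v w}.encard

/-- A directed graph is bounded if `deg(w) = deg⁺(w) + deg⁻(w)` is uniformly bounded. -/
def Bounded {W : Type*} (R : W → W → Prop) : Prop :=
  ∃ n : ℕ, ∀ w, degPlus R w + degMinus R w ≤ (n : ℕ∞)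

/-- A directed graph `⟨W,R⟩` as a structure for the first-order language `L_R` with a
single binary relation symbol (`Language.graph`). -/
def grStruct {W : Type*} (R : W → W → Prop) : Language.graph.Structure W where
  RelMap | .adj => fun x => R (x 0) (x 1)

/-- `D` is ℵ₁-incomplete: some countable family of members of `D` has empty intersection. -/
def Aleph1Incomplete {I : Type*} (D : Ultrafilter I) : Prop :=
  ∃ J : ℕ → Set I, (∀ n, J n ∈ D) ∧ ⋂ n, J n = ∅

/-- The `n`-Hull `⟨w⟩ⁿ`: `⟨w⟩⁰ = {w}`, `⟨w⟩^{i+1} = ⟨w⟩^i ∪ R⁺(⟨w⟩^i) ∪ R⁻(⟨w⟩^i)`. -/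
def hull {W : Type*} (R : W → W → Prop) (w : W) : ℕ → Set W
  | 0 => {w}
  | n + 1 => hull R w n ∪ Rplus R (hull R w n) ∪ Rminus R (hull R w n)

/-- The ω-Hull `⟨w⟩^ω = ⋃ₙ ⟨w⟩ⁿ`. -/
def hullOmega {W : Type*} (R : W → W → Prop) (w : W) : Set W := ⋃ n, hull R w n

/-- A pointed isomorphism between the induced subgraphs on `A ⊆ V` and `A' ⊆ V'`
sending the base point `a` to `a'`. -/
def PointedIso {V V' : Type*} (R : V → V → Prop) (R' : V' → V' → Prop)
    (A : Set V) (A' : Set V') (a : V) (a' : V') : Prop :=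
  ∃ f : V → V', Set.BijOn f A A' ∧ f a = a' ∧
    ∀ x ∈ A, ∀ y ∈ A, (R x y ↔ R' (f x) (f y))

theorem Ultrafilter.disjoint_coe_of_ne {α : Type*} {f g : Ultrafilter α} (hne : f ≠ g) :
    Disjoint (f : Filter α) g :=
  Ultrafilter.disjoint_iff_not_le.2 fun hle => hne (Ultrafilter.coe_le_coe.1 hle)

theorem Ultrafilter.exists_pairwiseDisjoint_mem {α : Type*} {T : Set (Ultrafilter α)}
    (hT : T.Finite) : ∃ X : Ultrafilter α → Set α, (∀ v, X v ∈ v) ∧ T.PairwiseDisjoint X :=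
  Set.PairwiseDisjoint.exists_mem_filter (l := ((↑) : Ultrafilter α → Filter α))
    (fun _ _ _ _ hne => Ultrafilter.disjoint_coe_of_ne hne) hT

theorem encard_le_degPlus_of_mem_Rminus {W ι : Type*} {R : W → W → Prop} {T : Set ι}
    {X : ι → Set W} (hX : T.PairwiseDisjoint X) {w : W} (hw : ∀ i ∈ T, w ∈ Rminus R (X i)) :
    T.encard ≤ degPlus R w := by
  have : Nonempty W := ⟨w⟩
  choose! s hsX hRs using hw
  refine Set.encard_le_encard_of_injOn hRs fun i hi j hj hij => ?_
  by_contra hne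
  exact Set.disjoint_left.1 (hX hi hj hne) (hsX i hi) (hij ▸ hsX j hj)

theorem eventually_encard_le_degPlus {W : Type*} {R : W → W → Prop} {u : Ultrafilter W}
    {T : Set (Ultrafilter W)} (hT : T.Finite) (hTu : ∀ v ∈ T, ueRel R u v) :
    ∀ᶠ w in u, T.encard ≤ degPlus R w := by
  obtain ⟨X, hXv, hX⟩ := Ultrafilter.exists_pairwiseDisjoint_mem hT
  have hRminus : ∀ᶠ w in u, ∀ v ∈ T, w ∈ Rminus R (X v) :=
    hT.eventually_all.2 fun v hv => hTu v hv (X v) (hXv v)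
  exact hRminus.mono fun w hw => encard_le_degPlus_of_mem_Rminus hX hw

/-- if `{w : deg⁺(w) ≤ n} ∈ u` then `u` has at most `n` `R^ue`-successors. -/
theorem stmt_1 {W : Type*} (R : W → W → Prop) (n : ℕ) (u : Ultrafilter W)
    (h : {w : W | degPlus R w ≤ (n : ℕ∞)} ∈ u) :
    {v : Ultrafilter W | ueRel R u v}.encard ≤ (n : ℕ∞) := by
  by_contra! hlt
  obtain ⟨T, hTu, hTcard⟩ := Set.exists_subset_encard_eq (Order.add_one_le_of_lt hlt)
  have hT : T.Finite := Set.finite_of_encard_eq_coe (k := n + 1) (by simpa using hTcard)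
  obtain ⟨w, hTw, hw⟩ := ((eventually_encard_le_degPlus hT hTu).and h).exists
  exact ((ENat.lt_add_one_iff (ENat.natCast_ne_top n)).2 le_rfl).not_ge (hTcard ▸ hTw.trans hw)
end

section
/- Let ⟨W,R⟩ be a directed graph. Then ⟨W,R⟩ is a generated substructure of its ultrafilter extension (that is: for every w ∈ W and every ultrafilter v on W, R^ue π_w v implies that v is principal) if and only if ⟨W,R⟩ is deg⁺-finite, i.e. every w ∈ W has only finitely many R-successors. -/
open Set Filter FirstOrder Language

/-- `⟨W,R⟩` is a generated substructure of its ultrafilter extension iff it is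
`deg⁺`-finite. -/
theorem stmt_2 {W : Type*} (R : W → W → Prop) :
    (∀ (w : W) (v : Ultrafilter W), ueRel R (pure w) v → ∃ x : W, v = pure x) ↔
      ∀ w : W, {v : W | R w v}.Finite := by
  constructor
  · intro h w
    by_contra hinf
    have hS : {v : W | R w v}.Infinite := hinf
    haveI := hS.cofinite_inf_principal_neBot
    set u : Ultrafilter W := Ultrafilter.of (Filter.cofinite ⊓ 𝓟 {v : W | R w v}) with hu
    have hle : (u : Filter W) ≤ Filter.cofinite ⊓ 𝓟 {v : W | R w v} := Ultrafilter.of_le _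
    have hSu : {v : W | R w v} ∈ u := (le_inf_iff.mp hle).2 (mem_principal_self _)
    have hcof : ∀ s : Set W, s.Finite → sᶜ ∈ u := fun s hs =>
      (le_inf_iff.mp hle).1 hs.compl_mem_cofinite
    have hue : ueRel R (pure w) u := by
      intro X hX
      have hXS : X ∩ {v : W | R w v} ∈ u := u.inter_mem hX hSu
      obtain ⟨s, hsX, hsS⟩ := u.nonempty_of_mem hXS
      exact mem_pure.mpr ⟨s, hsX, hsS⟩
    obtain ⟨x, hx⟩ := h w u hue
    have : ({x}ᶜ : Set W) ∈ u := hcof {x} (Set.finite_singleton x)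
    rw [hx] at this
    exact this rfl
  · intro h w v hue
    have hS : {s : W | R w s} ∈ v := by
      by_contra hc
      have : {s : W | R w s}ᶜ ∈ v := (Ultrafilter.compl_mem_iff_notMem).mpr hc
      have := hue _ this
      obtain ⟨s, hs1, hs2⟩ := mem_pure.mp this
      exact hs1 hs2
    obtain ⟨x, _, hx⟩ := v.eq_pure_of_finite_mem (h w) hS
    exact ⟨x, hx⟩
end

section
/- Let ⟨W,R⟩ be a directed graph, I an infinite set, and D an ℵ₁-incomplete ultrafilter on I. Then ⟨W,R⟩ is deg⁺-finite (every w ∈ W has only finitely many R-successors) if and only if the diagonal copy of ⟨W,R⟩ is a generated substructure of the ultrapower ^I⟨W,R⟩/D, i.e. for every w ∈ W and every element [f] of the ultrapower, R* [c_w] [f] implies [f] = [c_v] for some v ∈ W. -/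
open Set Filter FirstOrder Language

/-- for an ℵ₁-incomplete ultrafilter `D` over an infinite `I`, `⟨W,R⟩` is
`deg⁺`-finite iff the diagonal copy of `⟨W,R⟩` is a generated substructure of the
ultrapower `^I⟨W,R⟩/D` (realized as germs modulo `D`). -/
theorem stmt_3 {W : Type*} {I : Type*} [Infinite I] (R : W → W → Prop)
    (D : Ultrafilter I) (hD : Aleph1Incomplete D) :
    (∀ w : W, {v : W | R w v}.Finite) ↔
      ∀ (w : W) (f : (D : Filter I).Germ W),
        Filter.Germ.LiftRel R (↑w : (D : Filter I).Germ W) f →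
          ∃ v : W, f = (↑v : (D : Filter I).Germ W) := by
  constructor
  · intro hfin w f hrel
    induction f using Quotient.inductionOn with
    | h g =>
      have hrel' : ∀ᶠ i in (D : Filter I), R w (g i) :=
        (Filter.Germ.liftRel_coe (f := fun _ => w) (g := g)).mp hrel
      have hmem : {i | g i ∈ {v | R w v}} ∈ D := hrel'
      have hcover : {i | g i ∈ {v | R w v}} ⊆ ⋃ v ∈ {v | R w v}, {i | g i = v} := by
        intro i hi
        simp only [Set.mem_iUnion]
        exact ⟨g i, hi, rfl⟩
      have : (⋃ v ∈ {v | R w v}, {i | g i = v}) ∈ D := D.sets_of_superset hmem hcover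
      rw [Ultrafilter.finite_biUnion_mem_iff (hfin w)] at this
      obtain ⟨v, -, hv⟩ := this
      refine ⟨v, ?_⟩
      exact Quotient.sound (hv : ∀ᶠ i in (D : Filter I), g i = v)
  · intro h w
    classical
    by_contra hinf
    replace hinf : {v | R w v}.Infinite := hinf
    obtain ⟨J, hJ, hJempty⟩ := hD
    set e := hinf.natEmbedding
    have hex : ∀ i : I, ∃ n, i ∉ J n := by
      intro i
      by_contra hc
      push_neg at hc
      have : i ∈ ⋂ n, J n := Set.mem_iInter.mpr hc
      rw [hJempty] at this
      exact this
    set g : I → W := fun i => (e (Nat.find (hex i)) : W) with hg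
    have hrel : Filter.Germ.LiftRel R (↑w) (↑g : (D : Filter I).Germ W) := by
      exact (Filter.Germ.liftRel_coe (f := fun _ : I => w) (g := g)).mpr
        (Filter.Eventually.of_forall fun i => (e (Nat.find (hex i))).2)
    obtain ⟨v, hv⟩ := h w (↑g) hrel
    have hset : {i | g i = v} ∈ (D : Filter I) := Quotient.exact hv
    obtain ⟨i₀, hi₀⟩ := Filter.nonempty_of_mem hset
    set m := Nat.find (hex i₀)
    have hvm : v = (e m : W) := hi₀.symm
    have hT : ({i | g i = v} ∩ J m) ∈ (D : Filter I) := Filter.inter_mem hset (hJ m)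
    obtain ⟨i₁, hgi₁, hJi₁⟩ := Filter.nonempty_of_mem hT
    have hfind : Nat.find (hex i₁) = m := by
      have : e (Nat.find (hex i₁)) = e m := by
        apply Subtype.ext
        exact (hgi₁ : g i₁ = v).trans hvm
      exact e.injective this
    have : i₁ ∉ J m := hfind ▸ Nat.find_spec (hex i₁)
    exact this hJi₁
end

section
/- Let ⟨W,R⟩ be the disjoint union of the finite chains ⟨n,<⟩ for n ∈ ω, i.e. W = {(n,i) : n ∈ ω, i < n} and R (n,i) (m,j) ⟺ n = m and i < j. Although R is irreflexive, the ultrafilter extension of ⟨W,R⟩ has a reflexive point: there exists an ultrafilter u on W with R^ue u u. Consequently ⟨W,R⟩ is not elementarily equivalent to its ultrafilter extension. -/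
open Set Filter FirstOrder Language

/-- The disjoint union of the finite chains `⟨n,<⟩`, `n ∈ ω`:
elements are pairs `(n,i)` with `i < n`. -/
def Wchains : Type := {p : ℕ × ℕ // p.2 < p.1}

/-- `(n,i) R (m,j) ↔ n = m ∧ i < j`. -/
def Rchains (p q : Wchains) : Prop := p.1.1 = q.1.1 ∧ p.1.2 < q.1.2

theorem Ultrafilter.mem_bind {α β : Type*} {f : Ultrafilter α} {m : α → Ultrafilter β}
    {s : Set β} : s ∈ f.bind m ↔ {a | s ∈ m a} ∈ f :=
  Filter.mem_bind'

/-- `D.bind fun i => E.map (φ i)` is the iterated ultralimit `lim_{i → D} lim_{n → E} φ i n`. -/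
theorem ueRel_bind_map_self {ι κ W : Type*} {R : W → W → Prop} (D : Ultrafilter ι)
    (E : Ultrafilter κ) (φ : ι → κ → W)
    (hφ : ∀ i, ∀ᶠ j in D, ∀ᶠ n in E, R (φ i n) (φ j n)) :
    ueRel R (D.bind fun i => E.map (φ i)) (D.bind fun i => E.map (φ i)) := by
  intro X hX
  rw [Ultrafilter.mem_bind] at hX ⊢
  refine univ_mem' fun i => ?_
  obtain ⟨j, hjX, hij⟩ := (Filter.Eventually.and hX (hφ i)).exists
  filter_upwards [Ultrafilter.mem_map.1 hjX, hij] with n hn hRn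
  exact ⟨φ j n, hn, hRn⟩

/-- The point `(n, i)`; the `max` only makes this total when `n ≤ i`. -/
def chainPoint (i n : ℕ) : Wchains :=
  ⟨(max n (i + 1), i), Nat.lt_of_lt_of_le (Nat.lt_succ_self i) (le_max_right _ _)⟩

theorem Rchains_chainPoint {i j n : ℕ} (hij : i < j) (hjn : j < n) :
    Rchains (chainPoint i n) (chainPoint j n) :=
  ⟨by simp only [chainPoint]; omega, hij⟩

theorem eventually_gt_hyperfilter (i : ℕ) : ∀ᶠ j in (hyperfilter ℕ : Filter ℕ), i < j :=
  (eventually_gt_atTop i).filter_mono (Nat.cofinite_eq_atTop ▸ hyperfilter_le_cofinite)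

/-- The reflexive point is `lim_i lim_n (n, i)` along a nonprincipal ultrafilter: it sees the
`i`-th points of ever longer chains, and `(n, i) R (n, j)` for `i < j < n`. -/
theorem exists_ueRel_Rchains_self : ∃ u : Ultrafilter Wchains, ueRel Rchains u u := by
  refine ⟨_, ueRel_bind_map_self (hyperfilter ℕ) (hyperfilter ℕ) chainPoint fun i => ?_⟩
  filter_upwards [eventually_gt_hyperfilter i] with j hij
  filter_upwards [eventually_gt_hyperfilter j] with n hjn
  exact Rchains_chainPoint hij hjn

theorem Rchains_irrefl (p : Wchains) : ¬ Rchains p p := fun hp => lt_irrefl _ hp.2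

theorem not_elementarilyEquivalent_of_irrefl_of_refl_point {V W : Type*} {R : V → V → Prop}
    {S : W → W → Prop} (hR : ∀ v, ¬ R v v) {w : W} (hw : S w w) :
    ¬ (letI := grStruct R
       letI := grStruct S
       Language.graph.ElementarilyEquivalent V W) := by
  let := grStruct R
  let := grStruct S
  intro h
  have hirr := Language.elementarilyEquivalent_iff.1 h (Relations.irreflexive Language.adj)
  rw [Relations.realize_irreflexive, Relations.realize_irreflexive] at hirr
  exact (hirr.1 ⟨hR⟩).irrefl w hw

/-- the disjoint union of the finite chains is irreflexive, but its
ultrafilter extension has a reflexive point; consequently it is not elementarily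
equivalent to its ultrafilter extension. -/
theorem stmt_6 :
    (∀ p : Wchains, ¬ Rchains p p) ∧
    (∃ u : Ultrafilter Wchains, ueRel Rchains u u) ∧
    ¬ (letI := grStruct Rchains
       letI := grStruct (ueRel Rchains)
       Language.graph.ElementarilyEquivalent Wchains (Ultrafilter Wchains)) := by
  obtain ⟨u, hu⟩ := exists_ueRel_Rchains_self
  exact ⟨Rchains_irrefl, ⟨u, hu⟩,
    not_elementarilyEquivalent_of_irrefl_of_refl_point Rchains_irrefl hu⟩
end

section
/- Let ⟨ℕ, S⟩ be the successor graph on the natural numbers, i.e. S x y ⟺ y = x + 1. In the ultrafilter extension ⟨Uf(ℕ), S^ue⟩, every nonprincipal ultrafilter u has exactly one S^ue-successor and exactly one S^ue-predecessor: there is exactly one ultrafilter u⁺ with S^ue u u⁺ and exactly one ultrafilter u⁻ with S^ue u⁻ u, and both u⁺ and u⁻ are nonprincipal. -/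
open Set Filter FirstOrder Language

/-- The successor relation on ℕ. -/
def Srel (x y : ℕ) : Prop := y = x + 1


private lemma rminus_eq (X : Set ℕ) : Rminus Srel X = (· + 1) ⁻¹' X := by
  ext w
  simp [Rminus, Srel, eq_comm]

private lemma ueRel_iff (a b : Ultrafilter ℕ) :
    ueRel Srel a b ↔ b = Ultrafilter.map (· + 1) a := by
  constructor
  · intro h
    have hle : (Filter.map (· + 1) a : Filter ℕ) ≤ b := by
      rw [Filter.le_def]
      intro X hX
      have := h X hX
      rwa [rminus_eq] at this
    exact (Ultrafilter.coe_injective (b.unique hle)).symm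
  · intro h X hX
    rw [rminus_eq]
    subst h
    exact hX

/-- in the ultrafilter extension of `⟨ℕ,S⟩`, every nonprincipal ultrafilter
has exactly one `S^ue`-successor and exactly one `S^ue`-predecessor, both nonprincipal. -/
theorem stmt_7 (u : Ultrafilter ℕ) (hu : ∀ n : ℕ, u ≠ pure n) :
    (∃! v : Ultrafilter ℕ, ueRel Srel u v) ∧
    (∀ v : Ultrafilter ℕ, ueRel Srel u v → ∀ n : ℕ, v ≠ pure n) ∧
    (∃! w : Ultrafilter ℕ, ueRel Srel w u) ∧
    (∀ w : Ultrafilter ℕ, ueRel Srel w u → ∀ n : ℕ, w ≠ pure n) := by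

  have hpure : ∀ (a : Ultrafilter ℕ) (S : Set ℕ), S.Finite → S ∈ a → ∃ n, a = pure n := by
    intro a S hfin hmem
    obtain ⟨x, _, hx⟩ := Ultrafilter.eq_pure_of_finite_mem hfin hmem
    exact ⟨x, hx⟩
  have hone : {n : ℕ | 1 ≤ n} ∈ u := by
    have : ({0} : Set ℕ) ∉ u := by
      intro h
      obtain ⟨n, hn⟩ := hpure u {0} (Set.finite_singleton 0) h
      exact hu n hn
    have h2 := (Ultrafilter.compl_mem_iff_notMem).2 this
    have : ({0}ᶜ : Set ℕ) = {n : ℕ | 1 ≤ n} := by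
      ext n; simp [Nat.one_le_iff_ne_zero]
    rwa [this] at h2
  have hw0 : ueRel Srel (Ultrafilter.map (· - 1) u) u := by
    rw [ueRel_iff]
    apply Ultrafilter.coe_injective
    have : (Ultrafilter.map (· + 1) (Ultrafilter.map (· - 1) u) : Filter ℕ)
        = Filter.map (fun n => n - 1 + 1) u := by
      simp only [Ultrafilter.coe_map, Filter.map_map]
      rfl
    rw [this]
    have heq : (fun n : ℕ => n - 1 + 1) =ᶠ[(u : Filter ℕ)] id := by
      filter_upwards [hone] with n hn
      simpa using Nat.succ_pred_eq_of_pos hn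
    rw [Filter.map_congr heq, Filter.map_id]
  refine ⟨⟨Ultrafilter.map (· + 1) u, (ueRel_iff u _).2 rfl,
      fun v hv => (ueRel_iff u v).1 hv⟩, ?_, ⟨Ultrafilter.map (· - 1) u, hw0, ?_⟩, ?_⟩
  · intro v hv n hvn
    rw [(ueRel_iff u v).1 hv] at hvn
    have : (· + 1) ⁻¹' ({n} : Set ℕ) ∈ u := by
      have : ({n} : Set ℕ) ∈ Ultrafilter.map (· + 1) u := by rw [hvn]; exact rfl
      exact this
    have hfin : ((· + 1) ⁻¹' ({n} : Set ℕ)).Finite := by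
      apply Set.Finite.preimage _ (Set.finite_singleton n)
      intro a _ b _ h
      simpa using h
    obtain ⟨m, hm⟩ := hpure u _ hfin this
    exact hu m hm
  · intro w hw
    rw [ueRel_iff] at hw
    apply Ultrafilter.coe_injective
    apply Eq.symm
    apply w.unique
    rw [Filter.le_def]
    intro X hX
    have himg : (· + 1) '' X ∈ u := by
      rw [hw]
      show (· + 1) ⁻¹' ((· + 1) '' X) ∈ w
      have : X ⊆ (· + 1) ⁻¹' ((· + 1) '' X) := Set.subset_preimage_image _ _
      exact Filter.mem_of_superset hX this
    show (· - 1) ⁻¹' X ∈ u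
    apply Filter.mem_of_superset himg
    rintro _ ⟨x, hx, rfl⟩
    simpa using hx
  · intro w hw n hwn
    rw [ueRel_iff] at hw
    rw [hwn] at hw
    have : u = pure (n + 1) := by
      apply Ultrafilter.coe_injective
      rw [hw]
      simp
    exact hu (n + 1) this
end

section
/- Let ⟨ℕ, S⟩ be the successor graph on the natural numbers, i.e. S x y ⟺ y = x + 1. There exist an index set I and an ultrafilter D on I such that the ultrapower ^I⟨ℕ,S⟩/D is isomorphic, as a directed graph, to the ultrafilter extension ⟨Uf(ℕ), S^ue⟩; that is, there is a bijection h from the ultrapower onto Uf(ℕ) such that S* [f] [g] ⟺ S^ue h([f]) h([g]) for all elements [f], [g] of the ultrapower. -/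
open Set Filter FirstOrder Language

/-!
Both graphs are graphs of functions: `S*` of the germwise successor, `S^ue` of
`u ↦ u.map (· + 1)`. With base point `0`, resp. `pure 0`, each is a model of the theory of
`⟨ℕ, succ, 0⟩`: the successor is injective, misses exactly the base point and has no cycles.
Every such model is a copy of `ℕ` followed by `Q` copies of `ℤ`, so two models of the same
uncountable cardinality are isomorphic. For an ultrafilter `D` on `I = Finset (Set ℕ)` refining
`atTop`, the ultrapower has `2 ^ 2 ^ ℵ₀` elements, since coding `T ∩ s` for `s ∈ I` separates
all `T ⊆ Set ℕ`; and `Uf(ℕ)` has `2 ^ 2 ^ ℵ₀` elements by Pospíšil's independent-family argument.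
-/

open Function Cardinal

universe u

theorem Equiv.Perm.exists_prod_int_equiv {X : Type u} (p : Equiv.Perm X)
    (hfree : ∀ (z : ℤ) x, (p ^ z) x = x → z = 0) :
    ∃ (Q : Type u) (e : Q × ℤ ≃ X), Semiconj e (Prod.map id (· + 1)) p := by
  let φ : Quotient (SameCycle.setoid p) × ℤ → X := fun qz => (p ^ qz.2) qz.1.out
  have mk_φ (q : Quotient (SameCycle.setoid p)) (z : ℤ) : ⟦φ (q, z)⟧ = q := by
    conv_rhs => rw [← q.out_eq]
    exact Quotient.sound ⟨-z, by simp [φ]⟩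
  have φ_bijective : Bijective φ := by
    refine ⟨fun ⟨q, z⟩ ⟨q', z'⟩ h => ?_, fun x => ?_⟩
    · obtain rfl : q = q' := by rw [← mk_φ q z, ← mk_φ q' z', h]
      have : (p ^ (z - z')) (φ (q, z')) = φ (q, z') := by
        simp only [φ, ← Perm.mul_apply, ← zpow_add, sub_add_cancel]
        exact h
      rw [sub_eq_zero.1 (hfree _ _ this)]
    · obtain ⟨z, hz⟩ := Quotient.mk_out (s := SameCycle.setoid p) x
      exact ⟨(⟦x⟧, z), hz⟩
  refine ⟨_, .ofBijective φ φ_bijective, fun ⟨q, z⟩ => ?_⟩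
  simp [φ, add_comm z 1, zpow_add, Perm.mul_apply]

theorem Cardinal.mk_nat_sum_prod_int_eq {Q : Type u} (h : ℵ₀ < #(ℕ ⊕ Q × ℤ)) :
    #(ℕ ⊕ Q × ℤ) = #Q := by
  have : Infinite Q := by
    by_contra hQ
    rw [not_infinite_iff_finite] at hQ
    exact h.not_ge mk_le_aleph0
  simp [mk_sum, mk_prod, add_eq_max', aleph0_le_mk]

theorem Filter.Germ.iterate_map_coe {I α : Type*} {l : Filter I} (σ : α → α) (n : ℕ)
    (f : I → α) : (Germ.map σ)^[n] (f : l.Germ α) = ↑(σ^[n] ∘ f) := by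
  induction n with
  | zero => rfl
  | succ n ih => rw [iterate_succ_apply', ih, Germ.map_coe, ← comp_assoc, ← iterate_succ']

section SuccModel

variable {α β : Type u}

/-- `⟨α, σ, b⟩` is a model of the first-order theory of `⟨ℕ, succ, 0⟩`. -/
structure IsSuccModel (σ : α → α) (b : α) : Prop where
  injective : Injective σ
  ne_base : ∀ x, σ x ≠ b
  mem_range : ∀ x, x ≠ b → x ∈ range σ
  iterate_succ_ne : ∀ k x, σ^[k + 1] x ≠ x

def InfinitelyDivisible (σ : α → α) (x : α) : Prop := ∀ k, x ∈ range σ^[k]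

theorem InfinitelyDivisible.apply {σ : α → α} {x : α} (hx : InfinitelyDivisible σ x) :
    InfinitelyDivisible σ (σ x) := fun k => by
  obtain ⟨y, rfl⟩ := hx k
  exact ⟨σ y, (iterate_succ_apply σ k y).symm.trans (iterate_succ_apply' σ k y)⟩

namespace IsSuccModel

variable {σ : α → α} {b : α} (hσ : IsSuccModel σ b)
include hσ

theorem iterate_injective : Injective fun n => σ^[n] b := by
  suffices ∀ m n, σ^[m + n + 1] b ≠ σ^[m] b by
    intro m n h
    rcases lt_trichotomy m n with hmn | rfl | hmn
    · obtain ⟨k, rfl⟩ := Nat.exists_eq_add_of_lt hmn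
      exact absurd h.symm (this m k)
    · rfl
    · obtain ⟨k, rfl⟩ := Nat.exists_eq_add_of_lt hmn
      exact absurd h (this n k)
  intro m n h
  rw [add_assoc, add_comm, iterate_add_apply] at h
  exact hσ.iterate_succ_ne n _ h

theorem not_infinitelyDivisible_iterate (n : ℕ) : ¬ InfinitelyDivisible σ (σ^[n] b) := by
  intro h
  obtain ⟨y, hy⟩ := h (n + 1)
  rw [iterate_succ_apply] at hy
  exact hσ.ne_base y (hσ.injective.iterate n hy)

theorem infinitelyDivisible_or_exists_iterate_eq (x : α) :
    InfinitelyDivisible σ x ∨ ∃ n, σ^[n] b = x := by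
  refine or_iff_not_imp_right.2 fun hx k => ?_
  induction k with
  | zero => exact ⟨x, rfl⟩
  | succ k ih =>
    obtain ⟨y, rfl⟩ := ih
    have hy : y ≠ b := by
      rintro rfl
      exact hx ⟨k, rfl⟩
    obtain ⟨z, rfl⟩ := hσ.mem_range y hy
    exact ⟨z, iterate_succ_apply σ k z⟩

theorem infinitelyDivisible_of_apply {x : α} (hx : InfinitelyDivisible σ (σ x)) :
    InfinitelyDivisible σ x := fun k => by
  obtain ⟨y, hy⟩ := hx (k + 1)
  exact ⟨y, hσ.injective (by rwa [← iterate_succ_apply' σ k y])⟩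

noncomputable def divisiblePerm : Equiv.Perm {x // InfinitelyDivisible σ x} :=
  .ofBijective (fun x => ⟨σ x, x.2.apply⟩)
    ⟨fun x y h => Subtype.ext (hσ.injective (congrArg Subtype.val h)), fun ⟨x, hx⟩ => by
      obtain ⟨y, rfl⟩ := hx 1
      exact ⟨⟨y, hσ.infinitelyDivisible_of_apply hx⟩, rfl⟩⟩

theorem divisiblePerm_apply (x) : (hσ.divisiblePerm x : α) = σ x := rfl

theorem divisiblePerm_pow_apply (n : ℕ) (x) : ((hσ.divisiblePerm ^ n) x : α) = σ^[n] x := by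
  induction n with
  | zero => rfl
  | succ n ih => rw [pow_succ', Equiv.Perm.mul_apply, divisiblePerm_apply, ih, iterate_succ_apply']

theorem eq_zero_of_divisiblePerm_zpow_apply_eq {z : ℤ} {x} (h : (hσ.divisiblePerm ^ z) x = x) :
    z = 0 := by
  have key (n : ℕ) (h : (hσ.divisiblePerm ^ n) x = x) : n = 0 := by
    obtain _ | k := n
    · rfl
    · refine absurd (congrArg Subtype.val h) ?_
      rw [divisiblePerm_pow_apply]
      exact hσ.iterate_succ_ne k x
  obtain ⟨n, rfl | rfl⟩ := Int.eq_nat_or_neg z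
  · simp [key n (by simpa using h)]
  · rw [zpow_neg, Equiv.Perm.inv_eq_iff_eq, zpow_natCast] at h
    simp [key n h.symm]

theorem exists_equiv_nat_sum_prod_int :
    ∃ (Q : Type u) (e : ℕ ⊕ Q × ℤ ≃ α), Semiconj e (Sum.map (· + 1) (Prod.map id (· + 1))) σ := by
  obtain ⟨Q, eQ, heQ⟩ := hσ.divisiblePerm.exists_prod_int_equiv
    fun _ _ => hσ.eq_zero_of_divisiblePerm_zpow_apply_eq
  let f : ℕ ⊕ Q × ℤ → α := Sum.elim (fun n => σ^[n] b) fun qz => eQ qz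
  have f_bijective : Bijective f := by
    refine ⟨hσ.iterate_injective.sumElim (Subtype.val_injective.comp eQ.injective)
      fun n qz h => hσ.not_infinitelyDivisible_iterate n (h ▸ (eQ qz).2), fun x => ?_⟩
    obtain hx | ⟨n, rfl⟩ := hσ.infinitelyDivisible_or_exists_iterate_eq x
    · obtain ⟨qz, hqz⟩ := eQ.surjective ⟨x, hx⟩
      exact ⟨.inr qz, congrArg Subtype.val hqz⟩
    · exact ⟨.inl n, rfl⟩
  refine ⟨Q, .ofBijective f f_bijective, ?_⟩
  rintro (n | qz)
  · exact iterate_succ_apply' σ n b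
  · exact congrArg Subtype.val (heQ qz)

/-- The theory of `⟨ℕ, succ, 0⟩` is categorical in every uncountable cardinality. -/
theorem exists_equiv_semiconj {τ : β → β} {c : β} (hτ : IsSuccModel τ c) (hcard : #α = #β)
    (hα : ℵ₀ < #α) : ∃ e : α ≃ β, Semiconj e σ τ := by
  obtain ⟨Q, eα, heα⟩ := hσ.exists_equiv_nat_sum_prod_int
  obtain ⟨Q', eβ, heβ⟩ := hτ.exists_equiv_nat_sum_prod_int
  have hQα : #Q = #α := (mk_nat_sum_prod_int_eq (by rwa [mk_congr eα])).symm.trans (mk_congr eα)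
  have hQβ : #Q' = #β :=
    (mk_nat_sum_prod_int_eq (by rwa [mk_congr eβ, ← hcard])).symm.trans (mk_congr eβ)
  obtain ⟨q⟩ := Cardinal.eq.1 (hQα.trans (hcard.trans hQβ.symm))
  let m : ℕ ⊕ Q × ℤ ≃ ℕ ⊕ Q' × ℤ := .sumCongr (.refl ℕ) (.prodCongr q (.refl ℤ))
  have hm : Semiconj m (Sum.map (· + 1) (Prod.map id (· + 1)))
      (Sum.map (· + 1) (Prod.map id (· + 1))) := by
    rintro (n | qz) <;> rfl
  exact ⟨eα.symm.trans (m.trans eβ),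
    (heα.inverse_left eα.left_inv eα.right_inv).trans (hm.trans heβ)⟩

/-- Łoś's theorem for the theory of `⟨ℕ, succ, 0⟩`. -/
theorem germ {I : Type*} (𝒰 : Ultrafilter I) :
    IsSuccModel (Germ.map σ : (𝒰 : Filter I).Germ α → _) ↑b where
  injective x y := Germ.inductionOn₂ x y fun f g h => by
    rw [Germ.map_coe, Germ.map_coe, Germ.coe_eq] at h
    exact Germ.coe_eq.2 (h.mono fun i => @hσ.injective _ _)
  ne_base x := Germ.inductionOn x fun f h => by
    obtain ⟨i, hi⟩ := (Germ.coe_eq.1 h : ∀ᶠ i in (𝒰 : Filter I), σ (f i) = b).exists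
    exact hσ.ne_base _ hi
  mem_range x := Germ.inductionOn x fun f hf => by
    have : Nonempty α := ⟨b⟩
    have : ∀ᶠ i in (𝒰 : Filter I), f i ∈ range σ :=
      (Ultrafilter.eventually_not.2 (mt Germ.coe_eq.2 hf)).mono fun i => hσ.mem_range _
    exact ⟨↑(invFun σ ∘ f), Germ.coe_eq.2 (this.mono fun i => invFun_eq)⟩
  iterate_succ_ne k x := Germ.inductionOn x fun f h => by
    rw [Germ.iterate_map_coe, Germ.coe_eq] at h
    obtain ⟨i, hi⟩ := h.exists
    exact hσ.iterate_succ_ne k _ hi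

end IsSuccModel

end SuccModel

theorem Nat.isSuccModel : IsSuccModel (· + 1) 0 where
  injective := add_left_injective 1
  ne_base := Nat.succ_ne_zero
  mem_range n hn := ⟨n - 1, Nat.sub_add_cancel (Nat.pos_of_ne_zero hn)⟩
  iterate_succ_ne k n := by simp [add_right_iterate, add_assoc]

namespace Ultrafilter

variable {α β : Type*}

theorem map_injective {f : α → β} (hf : Injective f) : Injective (map f) := fun u v h =>
  Ultrafilter.ext fun X => by
    rw [← preimage_image_eq X hf, ← mem_map, ← mem_map, h]

theorem iterate_map (σ : α → α) (n : ℕ) (u : Ultrafilter α) : (map σ)^[n] u = u.map σ^[n] := by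
  induction n with
  | zero => exact u.map_id.symm
  | succ n ih => rw [iterate_succ_apply', ih, map_map, ← iterate_succ']

theorem map_ne_pure {σ : α → α} {b : α} (h : ∀ x, σ x ≠ b) (u : Ultrafilter α) :
    u.map σ ≠ pure b := fun hu => by
  obtain ⟨x, hx⟩ := Filter.nonempty_of_mem (mem_map.1 (hu ▸ mem_pure.2 rfl) : σ ⁻¹' {b} ∈ u)
  exact h x hx

theorem mem_range_map {σ : α → α} (hσ : Injective σ) {b : α} (h : ∀ x, x ≠ b → x ∈ range σ)
    {u : Ultrafilter α} (hu : u ≠ pure b) : u ∈ range (map σ) := by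
  have hrange : range σ ∈ u := by
    refine Filter.mem_of_superset (compl_mem_iff_notMem.2 fun hb => hu ?_) fun x hx => h x hx
    rw [← coe_le_coe, coe_pure, Filter.le_pure_iff]
    exact hb
  exact ⟨u.comap hσ hrange, coe_injective (Filter.map_comap_of_mem hrange)⟩

/-- Translation by `m` swaps the set of `n` with `n / m` even and its complement. -/
theorem map_add_ne_self {m : ℕ} (hm : 0 < m) (u : Ultrafilter ℕ) : u.map (· + m) ≠ u := by
  intro h
  set X : Set ℕ := {n | Even (n / m)}
  have hX : (· + m) ⁻¹' X = Xᶜ := by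
    ext n
    simp [X, Nat.add_div_right n hm, Nat.even_add_one]
  have : X ∈ u ↔ Xᶜ ∈ u := by
    conv_lhs => rw [← h]
    rw [mem_map, hX]
  rw [compl_mem_iff_notMem] at this
  exact (iff_not_self this).elim

end Ultrafilter

theorem isSuccModel_ultrafilter_nat :
    IsSuccModel (Ultrafilter.map (· + 1)) (pure 0 : Ultrafilter ℕ) where
  injective := Ultrafilter.map_injective Nat.isSuccModel.injective
  ne_base := Ultrafilter.map_ne_pure Nat.isSuccModel.ne_base
  mem_range _ := Ultrafilter.mem_range_map Nat.isSuccModel.injective Nat.isSuccModel.mem_range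
  iterate_succ_ne k u := by
    rw [Ultrafilter.iterate_map, add_right_iterate]
    simpa using u.map_add_ne_self k.succ_pos

section Cardinality

variable {α : Type u}

theorem exists_finset_injOn_inter {t : Set (Set α)} (ht : t.Finite) :
    ∃ F : Finset α, Set.InjOn (fun X => (F : Set α) ∩ X) t := by
  have (X Y : Set α) : ∃ F : Finset α, X ≠ Y → ∃ a ∈ F, ¬(a ∈ X ↔ a ∈ Y) := by
    by_cases h : X = Y
    · exact ⟨∅, fun h' => (h' h).elim⟩
    · obtain ⟨a, ha⟩ := not_forall.1 (mt Set.ext h)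
      exact ⟨{a}, fun _ => ⟨a, Finset.mem_singleton_self a, ha⟩⟩
  choose sep hsep using this
  classical
  let F := ht.toFinset.biUnion fun X => ht.toFinset.biUnion (sep X)
  refine ⟨F, fun X hX Y hY h => by_contra fun hne => ?_⟩
  obtain ⟨a, ha, hXY⟩ := hsep X Y hne
  have haF : a ∈ F := Finset.mem_biUnion.2
    ⟨X, ht.mem_toFinset.2 hX, Finset.mem_biUnion.2 ⟨Y, ht.mem_toFinset.2 hY, ha⟩⟩
  exact hXY (by simpa [haF] using Set.ext_iff.1 h a)

/-- Hausdorff's independent family of `2 ^ #α` subsets of a set of size `#α` (for infinite `α`). -/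
def indepSet (X : Set α) : Set (Finset α × Finset (Finset α)) :=
  {c | ∃ G ∈ c.2, (G : Set α) = (c.1 : Set α) ∩ X}

theorem exists_forall_mem_indepSet_iff {t : Set (Set α)} (ht : t.Finite) (T : Set (Set α)) :
    ∃ c, ∀ X ∈ t, c ∈ indepSet X ↔ X ∈ T := by
  classical
  obtain ⟨F, hF⟩ := exists_finset_injOn_inter ht
  refine ⟨(F, (ht.toFinset.filter (· ∈ T)).image fun X => F.filter (· ∈ X)), fun X hX => ?_⟩
  have trace (Y : Set α) : ((F.filter (· ∈ Y) : Finset α) : Set α) = (F : Set α) ∩ Y := by ext; simp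
  simp only [indepSet, Set.mem_ofPred_eq, Finset.mem_image, Finset.mem_filter, ht.mem_toFinset]
  constructor
  · rintro ⟨_, ⟨Y, ⟨hYt, hYT⟩, rfl⟩, hY⟩
    rwa [← hF hYt hX ((trace Y).symm.trans hY)]
  · exact fun hXT => ⟨_, ⟨X, ⟨hX, hXT⟩, rfl⟩, trace X⟩

def indepFilter (T : Set (Set α)) : Filter (Finset α × Finset (Finset α)) :=
  ⨅ X, 𝓟 {c | c ∈ indepSet X ↔ X ∈ T}

instance (T : Set (Set α)) : (indepFilter T).NeBot :=
  (hasBasis_iInf_principal_finite _).neBot_iff.2 fun ht =>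
    (exists_forall_mem_indepSet_iff ht T).imp fun _ hc => Set.mem_iInter₂.2 hc

noncomputable def indepUltrafilter (T : Set (Set α)) : Ultrafilter (Finset α × Finset (Finset α)) :=
  .of (indepFilter T)

theorem indepSet_mem_indepUltrafilter_iff (T : Set (Set α)) (X : Set α) :
    indepSet X ∈ indepUltrafilter T ↔ X ∈ T := by
  have hmem : {c | c ∈ indepSet X ↔ X ∈ T} ∈ indepUltrafilter T :=
    Ultrafilter.of_le _ (mem_iInf_of_mem X (mem_principal_self _))
  by_cases hXT : X ∈ T
  · exact iff_of_true (mem_of_superset hmem fun c hc => hc.2 hXT) hXT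
  · refine iff_of_false (Ultrafilter.compl_mem_iff_notMem.1 ?_) hXT
    exact mem_of_superset hmem fun c hc => mt hc.1 hXT

theorem indepUltrafilter_injective : Injective (indepUltrafilter : Set (Set α) → _) :=
  fun T T' h => Set.ext fun X => by
    rw [← indepSet_mem_indepUltrafilter_iff, h, indepSet_mem_indepUltrafilter_iff]

theorem Cardinal.mk_ultrafilter_le : #(Ultrafilter α) ≤ 2 ^ (2 : Cardinal) ^ #α := by
  rw [← mk_set, ← mk_set]
  exact mk_le_of_injective (f := fun u : Ultrafilter α => {X | X ∈ u}) fun u v h =>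
    Ultrafilter.ext fun X => Set.ext_iff.1 h X

/-- Pospíšil's theorem. -/
theorem Cardinal.mk_ultrafilter (α : Type u) [Infinite α] :
    #(Ultrafilter α) = 2 ^ (2 : Cardinal) ^ #α := by
  refine mk_ultrafilter_le.antisymm ?_
  obtain ⟨e⟩ : Nonempty (Finset α × Finset (Finset α) ≃ α) := Cardinal.eq.1 (by
    simp [mk_finset_of_infinite])
  calc 2 ^ (2 : Cardinal) ^ #α = #(Set (Set α)) := by rw [mk_set, mk_set]
    _ ≤ #(Ultrafilter (Finset α × Finset (Finset α))) :=
      mk_le_of_injective indepUltrafilter_injective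
    _ ≤ #(Ultrafilter α) := mk_le_of_injective (Ultrafilter.map_injective e.injective)

open scoped Classical in
/-- Encodes `T ∩ s` as a natural number, relative to the enumeration `s.toList` of `s`. -/
noncomputable def traceCode (T : Set (Set α)) (s : Finset (Set α)) : ℕ :=
  Encodable.encode (s.toList.map fun X => decide (X ∈ T))

theorem traceCode_germ_injective {l : Filter (Finset (Set α))} [l.NeBot] (hl : l ≤ atTop) :
    Injective fun T : Set (Set α) => (traceCode T : l.Germ ℕ) := by
  intro T T' h
  ext X
  by_contra hX
  have hmem : ∀ᶠ s in l, X ∈ s :=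
    ((eventually_ge_atTop {X}).filter_mono hl).mono fun _ => Finset.singleton_subset_iff.1
  obtain ⟨s, hs, hXs⟩ := ((Germ.coe_eq.1 h).and hmem).exists
  have := List.map_inj_left.1 (Encodable.encode_injective hs) X (Finset.mem_toList.2 hXs)
  exact hX (by simpa using this)

theorem Cardinal.mk_germ_nat_of_le_atTop [Infinite α] {l : Filter (Finset (Set α))} [l.NeBot]
    (hl : l ≤ atTop) :
    #(l.Germ ℕ) = 2 ^ (2 : Cardinal) ^ #α := by
  refine le_antisymm ?_ ?_
  · calc #(l.Germ ℕ) ≤ #(Finset (Set α) → ℕ) :=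
          mk_le_of_surjective fun x => Germ.inductionOn x fun f => ⟨f, rfl⟩
      _ = 2 ^ (2 : Cardinal) ^ #α := by
        have : ℵ₀ ≤ (2 : Cardinal) ^ #α := (aleph0_le_mk α).trans (cantor _).le
        simp [mk_finset_of_infinite, power_eq_two_power this (natCast_lt_aleph0 (n := 2)).le this]
  · calc 2 ^ (2 : Cardinal) ^ #α = #(Set (Set α)) := by rw [mk_set, mk_set]
      _ ≤ #(l.Germ ℕ) := mk_le_of_injective (traceCode_germ_injective hl)

end Cardinality

theorem Filter.Germ.liftRel_iff_map_eq {I β : Type*} {l : Filter I} {R : β → β → Prop} {φ : β → β}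
    (hR : ∀ x y, R x y ↔ y = φ x) (f g : l.Germ β) : LiftRel R f g ↔ f.map φ = g :=
  Germ.inductionOn₂ f g fun f g => by
    rw [liftRel_coe, map_coe, coe_eq]
    exact (Filter.eventually_congr (.of_forall fun i => hR (f i) (g i))).trans eventuallyEq_comm

theorem ueRel_iff_map_eq {W : Type*} {R : W → W → Prop} {φ : W → W} (hR : ∀ x y, R x y ↔ y = φ x)
    (u v : Ultrafilter W) : ueRel R u v ↔ u.map φ = v := by
  have hRminus (X : Set W) : Rminus R X = φ ⁻¹' X := by ext; simp [Rminus, hR]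
  simp only [ueRel, hRminus, ← Ultrafilter.coe_le_coe, Filter.le_def, Ultrafilter.mem_coe,
    Ultrafilter.mem_map]

/-- some ultrapower of `⟨ℕ,S⟩` is isomorphic, as a directed graph, to the
ultrafilter extension `⟨Uf(ℕ), S^ue⟩` (the ultrapower is realized as germs modulo `D`). -/
theorem stmt_8 :
    ∃ (I : Type) (D : Ultrafilter I) (h : (D : Filter I).Germ ℕ → Ultrafilter ℕ),
      Function.Bijective h ∧
      ∀ f g : (D : Filter I).Germ ℕ,
        Filter.Germ.LiftRel Srel f g ↔ ueRel Srel (h f) (h g) := by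
  let D : Ultrafilter (Finset (Set ℕ)) := .of atTop
  have hcard : #((D : Filter (Finset (Set ℕ))).Germ ℕ) = #(Ultrafilter ℕ) := by
    rw [mk_germ_nat_of_le_atTop (Ultrafilter.of_le atTop), mk_ultrafilter]
  have huncountable : ℵ₀ < #((D : Filter (Finset (Set ℕ))).Germ ℕ) := by
    rw [hcard, mk_ultrafilter, mk_nat]
    exact (cantor _).trans (cantor _)
  obtain ⟨e, he⟩ := (Nat.isSuccModel.germ D).exists_equiv_semiconj isSuccModel_ultrafilter_nat
    hcard huncountable
  refine ⟨_, D, e, e.bijective, fun f g => ?_⟩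
  have hS (x y : ℕ) : Srel x y ↔ y = x + 1 := Iff.rfl
  rw [Germ.liftRel_iff_map_eq hS, ueRel_iff_map_eq hS, ← he, e.injective.eq_iff]
end

section
/- Let ⟨W,R⟩ be a bounded directed graph. Then for every ultrafilter u on W: R^ue u u holds in the ultrafilter extension if and only if {w ∈ W : R w w} ∈ u. -/
open Set Filter FirstOrder Language

lemma exists_coloring {W : Type*} (R : W → W → Prop) (n : ℕ)
    (hn : ∀ w, ({v | v ≠ w ∧ (R w v ∨ R v w)}).Finite ∧
      ({v | v ≠ w ∧ (R w v ∨ R v w)}).ncard ≤ n) :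
    ∃ f : W → Fin (n + 1), ∀ v w, v ≠ w → R v w → f v ≠ f w := by
  classical
  let r : W → W → Prop := WellOrderingRel
  have wf : WellFounded r := (WellOrderingRel.isWellOrder).wf
  set N : W → Set W := fun w => {v | v ≠ w ∧ (R w v ∨ R v w)} with hN
  have key : ∀ w (g : ∀ v, r v w → Fin (n + 1)),
      ∃ c : Fin (n + 1), ∀ v (h : r v w), v ∈ N w → g v h ≠ c := by
    intro w g
    have hF : (N w).Finite := (hn w).1
    let used : Finset (Fin (n + 1)) :=
      Finset.image (fun v => if h : r v w ∧ v ∈ N w then g v h.1 else default) hF.toFinset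
    have hcard : used.card < Fintype.card (Fin (n + 1)) := by
      have h1 : used.card ≤ hF.toFinset.card := Finset.card_image_le
      have h2 : hF.toFinset.card = (N w).ncard := (Set.ncard_eq_toFinset_card _ hF).symm
      have h3 : (N w).ncard ≤ n := (hn w).2
      simp only [Fintype.card_fin]
      omega
    obtain ⟨c, hc⟩ : ∃ c, c ∉ used := by
      by_contra hco
      push_neg at hco
      have : used = Finset.univ := Finset.eq_univ_iff_forall.mpr hco
      rw [this, Finset.card_univ] at hcard
      exact lt_irrefl _ hcard
    refine ⟨c, fun v h hv hgv => hc ?_⟩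
    have hm := Finset.mem_image_of_mem
      (fun v => if h : r v w ∧ v ∈ N w then g v h.1 else default)
      (hF.mem_toFinset.mpr hv)
    simp only [dif_pos (And.intro h hv)] at hm
    exact hgv ▸ hm
  let F : ∀ w, (∀ v, r v w → Fin (n + 1)) → Fin (n + 1) :=
    fun w g => Classical.choose (key w g)
  let f : W → Fin (n + 1) := WellFounded.fix wf F
  have hfix : ∀ w, f w = F w (fun v _ => f v) := fun w => WellFounded.fix_eq wf F w
  have hspec : ∀ w v (h : r v w), v ∈ N w → f v ≠ f w := by
    intro w v h hv
    have := Classical.choose_spec (key w (fun v _ => f v)) v h hv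
    rw [hfix w]
    exact this
  refine ⟨f, fun v w hvw hR => ?_⟩
  rcases trichotomous_of r v w with h | h | h
  · exact hspec w v h ⟨hvw, Or.inr hR⟩
  · exact absurd h hvw
  · exact (hspec v w h ⟨hvw.symm, Or.inl hR⟩).symm

/-- in a bounded graph, an ultrafilter is `R^ue`-reflexive iff the set of
`R`-reflexive points belongs to it. -/
theorem stmt_9 {W : Type*} (R : W → W → Prop) (hb : Bounded R) (u : Ultrafilter W) :
    ueRel R u u ↔ {w : W | R w w} ∈ u := by
  constructor
  · intro h
    by_contra hnot
    have hS : {w : W | ¬ R w w} ∈ u := by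
      have := (Ultrafilter.compl_mem_iff_notMem (s := {w : W | R w w})).mpr hnot
      simpa [Set.compl_setOf] using this
    obtain ⟨n, hn⟩ := hb
    have hdeg : ∀ w, ({v | v ≠ w ∧ (R w v ∨ R v w)}).Finite ∧
        ({v | v ≠ w ∧ (R w v ∨ R v w)}).ncard ≤ n := by
      intro w
      have hsub : {v | v ≠ w ∧ (R w v ∨ R v w)} ⊆ {v | R w v} ∪ {v | R v w} := by
        rintro v ⟨-, hv | hv⟩
        · exact Or.inl hv
        · exact Or.inr hv
      have hen : ({v | v ≠ w ∧ (R w v ∨ R v w)}).encard ≤ (n : ℕ∞) :=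
        le_trans (Set.encard_mono hsub) (le_trans (Set.encard_union_le _ _) (hn w))
      exact Set.encard_le_coe_iff_finite_ncard_le.mp hen
    obtain ⟨f, hf⟩ := exists_coloring R n hdeg
    have hcover : (⋃ c ∈ (Set.univ : Set (Fin (n + 1))), {w | f w = c}) ∈ u := by
      have : (⋃ c ∈ (Set.univ : Set (Fin (n + 1))), {w : W | f w = c}) = Set.univ := by
        ext w
        simp
      rw [this]
      exact Filter.univ_mem
    obtain ⟨c, -, hcu⟩ := (Ultrafilter.finite_biUnion_mem_iff Set.finite_univ).mp hcover
    set X : Set W := {w | f w = c} ∩ {w | ¬ R w w} with hX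
    have hXu : X ∈ u := Filter.inter_mem hcu hS
    have hRm : Rminus R X ∈ u := h X hXu
    obtain ⟨w, hw1, hw2⟩ := Ultrafilter.nonempty_of_mem (Filter.inter_mem hXu hRm)
    obtain ⟨s, hsX, hRws⟩ := hw2
    by_cases hws : w = s
    · exact hw1.2 (hws ▸ hRws)
    · exact hf w s hws hRws (hw1.1.trans hsX.1.symm)
  · intro h X hX
    have : X ∩ {w : W | R w w} ⊆ Rminus R X := fun w ⟨hw, hr⟩ => ⟨w, hw, hr⟩
    exact Filter.mem_of_superset (Filter.inter_mem hX h) this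
end

section
/- Let ⟨W,R⟩ be a bounded directed graph, n ∈ ℕ, and u an ultrafilter on W. Then deg⁺(u) = n (u has exactly n distinct R^ue-successors in the ultrafilter extension) if and only if {w ∈ W : deg⁺(w) = n} ∈ u. -/
/-!
If `u`-almost every point has exactly `k` successors, enumerate them by maps
`e₁, …, e_k : W → W`; the `R^ue`-successors of `u` are then exactly the image ultrafilters
`eⱼ(u)`. These are pairwise distinct because bounded in-degree makes the fibres of the `eⱼ`
uniformly finite: the graph joining `eᵢ(w)` to `eⱼ(w)` then has bounded degree, a greedy colouring
with finitely many colours separates `eᵢ(w)` from `eⱼ(w)`, and the push-forwards of `u` to the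
finite set of colours are principal, hence different.
-/

open Set Filter FirstOrder Language

open Function

theorem SimpleGraph.colorable_of_encard_neighborSet_le {V : Type*} (G : SimpleGraph V) {d : ℕ}
    (h : ∀ v, (G.neighborSet v).encard ≤ d) : G.Colorable (d + 1) := by
  classical
  obtain ⟨_, _⟩ := exists_wellFoundedLT V
  obtain ⟨c, hc⟩ : ∃ c : V → ℕ, ∀ v, c v = sInf (c '' {w | w < v ∧ G.Adj v w})ᶜ :=
    ⟨WellFoundedLT.fix fun v c' => sInf {n | ∀ w (hw : w < v), G.Adj v w → c' w hw ≠ n},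
      fun v => by rw [WellFoundedLT.fix_eq]; congr 1; ext n; simp⟩
  let used (v : V) : Set ℕ := c '' {w | w < v ∧ G.Adj v w}
  have hfree (v : V) : ∃ n ≤ d, n ∉ used v := by
    by_contra! hall
    have hsub : {n | n < d + 1} ⊆ used v := fun n hn => hall n (Nat.lt_succ_iff.1 hn)
    have := (encard_le_encard hsub).trans <|
      (encard_image_le _ _).trans <| (encard_le_encard fun w hw => hw.2).trans (h v)
    rw [Nat.encard_range] at this
    exact absurd (Nat.cast_le.1 this) (by omega)
  have hcv (v : V) : c v ≤ d ∧ c v ∉ used v := by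
    obtain ⟨n, hnd, hn⟩ := hfree v
    rw [hc]
    exact ⟨(Nat.sInf_le hn).trans hnd, Nat.sInf_mem (⟨n, hn⟩ : (used v)ᶜ.Nonempty)⟩
  refine (G.colorable_iff_exists_bdd_nat_coloring _).2
    ⟨SimpleGraph.Coloring.mk c fun {v w} hvw => ?_, fun v => Nat.lt_succ_of_le (hcv v).1⟩
  rcases lt_trichotomy v w with hlt | rfl | hlt
  · exact fun he => (hcv w).2 ⟨v, ⟨hlt, hvw.symm⟩, he⟩
  · exact (G.irrefl hvw).elim
  · exact fun he => (hcv v).2 ⟨w, ⟨hlt, hvw⟩, he.symm⟩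

theorem Set.exists_injective_range_eq_of_encard_eq {α : Type*} {s : Set α} {k : ℕ}
    (h : s.encard = k) : ∃ e : Fin k → α, Injective e ∧ range e = s := by
  have : Finite s := (finite_of_encard_eq_coe h).to_subtype
  have hcard : Nat.card s = k := by rw [Nat.card_coe_set_eq, ncard_def, h, ENat.toNat_natCast]
  let eq := Finite.equivFinOfCardEq hcard
  exact ⟨Subtype.val ∘ eq.symm, Subtype.val_injective.comp eq.symm.injective, by
    rw [range_comp, eq.symm.range_eq_univ, image_univ, Subtype.range_coe]⟩

namespace Ultrafilter

variable {α β : Type*} {u : Ultrafilter α}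

theorem exists_eventually_eq_of_le {f : α → ℕ∞} {N : ℕ} (h : ∀ a, f a ≤ N) :
    ∃ k : ℕ, ∀ᶠ a in u, f a = k := by
  have hcover : ⋃ k ∈ Iic N, {a | f a = k} = univ := eq_univ_of_forall fun a => by
    obtain ⟨k, hk, hkN⟩ := ENat.le_natCast_iff.1 (h a)
    exact mem_biUnion hkN hk
  obtain ⟨k, -, hk⟩ := (finite_biUnion_mem_iff (finite_Iic N)).1 (hcover ▸ univ_mem)
  exact ⟨k, hk⟩

theorem map_ne_map_of_eventually_ne [Finite β] {f g : α → β} (h : ∀ᶠ a in u, f a ≠ g a) :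
    u.map f ≠ u.map g := by
  intro hfg
  obtain ⟨b, hb⟩ := (u.map f).eq_pure_of_finite
  have hf : ∀ᶠ a in u, f a = b :=
    mem_map.1 (show ({b} : Set β) ∈ u.map f by rw [hb]; exact mem_pure.2 rfl)
  have hg : ∀ᶠ a in u, g a = b :=
    mem_map.1 (show ({b} : Set β) ∈ u.map g by rw [← hfg, hb]; exact mem_pure.2 rfl)
  obtain ⟨a, hfa, hga, hne⟩ := (hf.and (hg.and h)).exists
  exact hne (hfa.trans hga.symm)

theorem map_ne_map_of_encard_fiber_le {f g : α → β} {s : Set α} (hs : s ∈ u)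
    (hne : ∀ a ∈ s, f a ≠ g a) {N : ℕ} (hf : ∀ b, (s ∩ f ⁻¹' {b}).encard ≤ N)
    (hg : ∀ b, (s ∩ g ⁻¹' {b}).encard ≤ N) : u.map f ≠ u.map g := by
  let G := SimpleGraph.fromRel fun x y => ∃ a ∈ s, f a = x ∧ g a = y
  have hdeg (x : β) : (G.neighborSet x).encard ≤ (N + N : ℕ) := by
    have hsub : G.neighborSet x ⊆ g '' (s ∩ f ⁻¹' {x}) ∪ f '' (s ∩ g ⁻¹' {x}) := by
      rintro y ⟨-, ⟨a, ha, rfl, rfl⟩ | ⟨a, ha, rfl, rfl⟩⟩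
      · exact Or.inl ⟨a, ⟨ha, rfl⟩, rfl⟩
      · exact Or.inr ⟨a, ⟨ha, rfl⟩, rfl⟩
    calc (G.neighborSet x).encard
        ≤ (g '' (s ∩ f ⁻¹' {x})).encard + (f '' (s ∩ g ⁻¹' {x})).encard :=
          (encard_le_encard hsub).trans (encard_union_le _ _)
      _ ≤ (N + N : ℕ) := by
          push_cast
          gcongr
          exacts [(encard_image_le _ _).trans (hf x), (encard_image_le _ _).trans (hg x)]
  obtain ⟨C⟩ := G.colorable_of_encard_neighborSet_le hdeg
  intro hfg
  refine map_ne_map_of_eventually_ne (f := C ∘ f) (g := C ∘ g) ?_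
    (by rw [← map_map, hfg, map_map])
  filter_upwards [hs] with a ha
  exact C.valid ((SimpleGraph.fromRel_adj _ _ _).2 ⟨hne a ha, Or.inl ⟨a, ha, rfl, rfl⟩⟩)

end Ultrafilter

section UltrafilterExtension

variable {W : Type*} {R : W → W → Prop}

theorem ueRel_iff_exists_map_eq {u : Ultrafilter W} {k : ℕ} {A : Set W} (hA : A ∈ u)
    {e : W → Fin k → W} (he : ∀ w ∈ A, ∀ s, R w s ↔ ∃ j, e w j = s) {v : Ultrafilter W} :
    ueRel R u v ↔ ∃ j, u.map (e · j) = v := by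
  constructor
  · intro huv
    by_contra! hne
    have hsep (j : Fin k) : ∃ X ∈ v, X ∉ u.map (e · j) := by
      by_contra! hle
      exact hne j (Ultrafilter.eq_of_le hle)
    choose X hXv hXu using hsep
    have hout : ∀ᶠ w in u, ∀ j, e w j ∉ X j := eventually_all.2 fun j =>
      Ultrafilter.mem_map.1 (Ultrafilter.compl_mem_iff_notMem.2 (hXu j))
    have : ∀ᶠ _ in (u : Filter W), False := by
      filter_upwards [hA, huv _ (iInter_mem.2 hXv), hout] with w hw ⟨s, hsX, hws⟩ hwX
      obtain ⟨j, rfl⟩ := (he w hw s).1 hws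
      exact hwX j (mem_iInter.1 hsX j)
    obtain ⟨_, h⟩ := this.exists
    exact h
  · rintro ⟨j, rfl⟩ X hX
    filter_upwards [hA, Ultrafilter.mem_map.1 hX] with w hw hwX
    exact ⟨e w j, hwX, (he w hw _).2 ⟨j, rfl⟩⟩

theorem encard_setOf_ueRel_eq {N : ℕ} (hN : ∀ w, degMinus R w ≤ N) {u : Ultrafilter W} {k : ℕ}
    (hk : {w | degPlus R w = k} ∈ u) : {v | ueRel R u v}.encard = k := by
  have hsucc (w : W) : ∃ e : Fin k → W, degPlus R w = k → Injective e ∧ range e = {s | R w s} :=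
    if hw : degPlus R w = k then (exists_injective_range_eq_of_encard_eq hw).imp fun _ he _ => he
    else ⟨fun _ => w, fun h => (hw h).elim⟩
  choose e he using hsucc
  have henum : ∀ w ∈ {w | degPlus R w = k}, ∀ s, R w s ↔ ∃ j, e w j = s :=
    fun w hw s => (Set.ext_iff.1 (he w hw).2 s).symm
  have hset : {v | ueRel R u v} = range fun j => u.map (e · j) :=
    ext fun v => ueRel_iff_exists_map_eq hk henum
  have hfiber (j : Fin k) (b : W) : ({w | degPlus R w = k} ∩ (e · j) ⁻¹' {b}).encard ≤ N := by
    refine le_trans (encard_le_encard fun w ⟨hw, hwb⟩ => ?_) (hN b)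
    obtain rfl : e w j = b := hwb
    exact (henum w hw _).2 ⟨j, rfl⟩
  have hinj : Injective fun j => u.map (e · j) := fun i j hij => by_contra fun hne =>
    Ultrafilter.map_ne_map_of_encard_fiber_le hk (fun w hw => (he w hw).1.ne hne)
      (hfiber i) (hfiber j) hij
  rw [hset, ← image_univ, hinj.encard_image, encard_univ, ENat.card_eq_coe_fintype_card,
    Fintype.card_fin]

end UltrafilterExtension

/-- in a bounded graph, `deg⁺(u) = n` in the ultrafilter extension iff
`{w : deg⁺(w) = n} ∈ u`. -/
theorem stmt_10 {W : Type*} (R : W → W → Prop) (hb : Bounded R) (n : ℕ) (u : Ultrafilter W) :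
    {v : Ultrafilter W | ueRel R u v}.encard = (n : ℕ∞) ↔
      {w : W | degPlus R w = (n : ℕ∞)} ∈ u := by
  obtain ⟨N, hN⟩ := hb
  have hin (w : W) : degMinus R w ≤ N := le_add_self.trans (hN w)
  refine ⟨fun h => ?_, encard_setOf_ueRel_eq hin⟩
  obtain ⟨k, hk⟩ := u.exists_eventually_eq_of_le fun w => le_self_add.trans (hN w)
  rw [encard_setOf_ueRel_eq hin hk, Nat.cast_inj] at h
  exact h ▸ hk
end

section
/- Let ⟨W,R⟩ be a directed graph and m ∈ ℕ such that deg(w) ≤ m for every w ∈ W. Then ⟨W,R⟩ admits a proper (m+1)-coloring: there is a function c : W → {0,…,m} such that c(x) ≠ c(y) whenever x ≠ y and R x y. -/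
open Set Filter FirstOrder Language

theorem finColor {W : Type*} (R : W → W → Prop) (m : ℕ)
    (h : ∀ w : W, ({v | R w v} : Set W).encard + ({v | R v w} : Set W).encard ≤ (m : ℕ∞)) :
    ∀ S : Finset W, ∃ c : W → Fin (m + 1),
      ∀ x ∈ S, ∀ y ∈ S, x ≠ y → R x y → c x ≠ c y := by
  classical
  intro S
  induction S using Finset.induction_on with
  | empty => exact ⟨fun _ => 0, by simp⟩
  | @insert v S' hv ih =>
    obtain ⟨c', hc'⟩ := ih
    have hsplit : ({u | R v u ∨ R u v} : Set W) = {u | R v u} ∪ {u | R u v} := by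
      ext u; simp [Set.mem_union]
    have hNle : ({u | R v u ∨ R u v} : Set W).encard ≤ (m : ℕ∞) :=
      le_trans (by rw [hsplit]; exact Set.encard_union_le _ _) (h v)
    have hNfin : ({u | R v u ∨ R u v} : Set W).Finite := by
      rw [← Set.encard_lt_top_iff]
      exact lt_of_le_of_lt hNle (by simp)
    have hNcard : hNfin.toFinset.card ≤ m := by
      rw [Set.Finite.encard_eq_coe_toFinset_card hNfin, Nat.cast_le] at hNle
      exact hNle
    set forbidden := hNfin.toFinset.image c' with hf
    have hne : forbidden ≠ Finset.univ := by
      intro hEq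
      have h1 : Fintype.card (Fin (m + 1)) = forbidden.card := by
        rw [hEq, Finset.card_univ]
      have h2 : forbidden.card ≤ m := le_trans Finset.card_image_le hNcard
      rw [← h1, Fintype.card_fin] at h2
      omega
    have hlt : forbidden.card < Fintype.card (Fin (m + 1)) := by
      have h2 : forbidden.card ≤ m := le_trans Finset.card_image_le hNcard
      rw [Fintype.card_fin]; omega
    have hne2 : forbidden ≠ Finset.univ := (forbidden.card_lt_iff_ne_univ).mp hlt
    obtain ⟨k, -, hk⟩ := Finset.exists_of_ssubset (Finset.ssubset_univ_iff.mpr hne2)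
    refine ⟨Function.update c' v k, ?_⟩
    intro x hx y hy hxy hR
    rcases Finset.mem_insert.mp hx with rfl | hx'
    · rcases Finset.mem_insert.mp hy with rfl | hy'
      · exact absurd rfl hxy
      · have hyv : y ≠ x := fun e => hxy e.symm
        rw [Function.update_self, Function.update_of_ne hyv]
        intro hEq
        exact hk (Finset.mem_image.mpr ⟨y, hNfin.mem_toFinset.mpr (Or.inl hR), hEq.symm⟩)
    · rcases Finset.mem_insert.mp hy with rfl | hy'
      · rw [Function.update_of_ne hxy, Function.update_self]
        intro hEq
        exact hk (Finset.mem_image.mpr ⟨x, hNfin.mem_toFinset.mpr (Or.inr hR), hEq⟩)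
      · have hxv : x ≠ v := fun e => hv (e ▸ hx')
        have hyv : y ≠ v := fun e => hv (e ▸ hy')
        rw [Function.update_of_ne hxv, Function.update_of_ne hyv]
        exact hc' x hx' y hy' hxy hR

/-- directed de Bruijn–Erdős for bounded degree: if `deg(w) ≤ m` for all
`w`, then there is a proper `(m+1)`-coloring (loops do not affect the coloring). -/
theorem stmt_11 {W : Type*} (R : W → W → Prop) (m : ℕ)
    (h : ∀ w : W, degPlus R w + degMinus R w ≤ (m : ℕ∞)) :
    ∃ c : W → Fin (m + 1), ∀ x y : W, x ≠ y → R x y → c x ≠ c y := by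
  classical
  have hdeg : ∀ w : W, ({v | R w v} : Set W).encard + ({v | R v w} : Set W).encard ≤ (m : ℕ∞) := h
  set ι := {p : W × W // p.1 ≠ p.2 ∧ R p.1 p.2} with hι
  set Z : ι → Set (W → Fin (m + 1)) := fun p => {c | c p.1.1 ≠ c p.1.2} with hZ
  have hZc : ∀ p : ι, IsClosed (Z p) := by
    intro p
    have hcont : Continuous (fun c : W → Fin (m + 1) => (c p.1.1, c p.1.2)) :=
      (continuous_apply _).prodMk (continuous_apply _)
    have : Z p = (fun c : W → Fin (m + 1) => (c p.1.1, c p.1.2)) ⁻¹'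
        {q : Fin (m + 1) × Fin (m + 1) | q.1 ≠ q.2} := rfl
    rw [this]
    exact IsClosed.preimage hcont (isClosed_discrete _)
  have hne : (⋂ p : ι, Z p).Nonempty := by
    by_contra hempty
    rw [Set.not_nonempty_iff_eq_empty] at hempty
    have h0 : (Set.univ ∩ ⋂ p : ι, Z p) = ∅ := by rw [hempty]; simp
    obtain ⟨u, hu⟩ := IsCompact.elim_finite_subfamily_closed isCompact_univ Z hZc h0
    set S : Finset W := u.image (fun p => p.1.1) ∪ u.image (fun p => p.1.2) with hS
    obtain ⟨c, hc⟩ := finColor R m hdeg S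
    have hcmem : c ∈ Set.univ ∩ ⋂ p ∈ u, Z p := by
      refine ⟨trivial, ?_⟩
      simp only [Set.mem_iInter]
      intro p hp
      have hx : p.1.1 ∈ S := Finset.mem_union_left _ (Finset.mem_image_of_mem _ hp)
      have hy : p.1.2 ∈ S := Finset.mem_union_right _ (Finset.mem_image_of_mem _ hp)
      exact hc _ hx _ hy p.2.1 p.2.2
    rw [hu] at hcmem
    exact hcmem
  obtain ⟨c, hc⟩ := hne
  refine ⟨c, fun x y hxy hR => ?_⟩
  have := Set.mem_iInter.mp hc ⟨(x, y), hxy, hR⟩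
  exact this
end

section
/- Let D be a nonprincipal ultrafilter on ω and let ⟨P, <*⟩ be the ultraproduct of the finite chains ⟨n, <⟩ (n ∈ ω) over D: its universe is the quotient of the dependent functions f with f(n) ∈ {0,…,n−1} by f ∼ g ⟺ {n : f(n) = g(n)} ∈ D, with [f] <* [g] ⟺ {n : f(n) < g(n)} ∈ D. Then <* is irreflexive, but the ultrafilter extension of ⟨P, <*⟩ has a reflexive point: there is an ultrafilter u on P with (<*)^ue u u. Consequently, the class {⟨W,R⟩ : ⟨W,R⟩ ≡ its ultrafilter extension} is not closed under ultraproducts. -/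
open Set Filter FirstOrder Language

/-- The ultraproduct of the finite chains `⟨n,<⟩` over `D`: germs (modulo `D`) of
functions `f : ℕ → ℕ` satisfying `f n < n` `D`-almost everywhere (the `n = 0` factor is
empty, so the constraint can only be required on a member of `D`). -/
def UltraprodChains (D : Ultrafilter ℕ) : Type :=
  {x : (D : Filter ℕ).Germ ℕ //
    Filter.Germ.LiftRel (fun n k => k < n) (↑(id : ℕ → ℕ) : (D : Filter ℕ).Germ ℕ) x}

/-- The relation `[f] <* [g] ↔ {n | f n < g n} ∈ D`. -/
def ltUltraprodChains (D : Ultrafilter ℕ) (x y : UltraprodChains D) : Prop :=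
  Filter.Germ.LiftRel (· < ·) x.1 y.1

/-! On a finite set every ultrafilter is principal, so `pure` is an isomorphism of a finite
graph onto its ultrafilter extension. The ultraproduct `P` is an infinite strict linear order.
In a trichotomous relation a set `X` has at most one maximal element, so for a nonprincipal
ultrafilter `u` on `P` and `X ∈ u`, all of `X` but at most one point lies in `R⁻(X)`; hence
`R^ue u u`. Irreflexivity is expressed by a first-order sentence, so `P ≢ P^ue`. -/

section UltrafilterExtension

variable {W : Type*} (R : W → W → Prop)

theorem ueRel_pure_pure_iff {a b : W} : ueRel R (pure a) (pure b) ↔ R a b :=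
  ⟨fun h => by simpa [Rminus] using h {b} rfl, fun h _ hX => ⟨b, hX, h⟩⟩

theorem elementarilyEquivalent_ultrafilter_of_finite [Finite W] :
    letI := grStruct R
    letI := grStruct (ueRel R)
    Language.graph.ElementarilyEquivalent W (Ultrafilter W) := by
  let := grStruct R
  let := grStruct (ueRel R)
  have hpure : Function.Bijective (pure : W → Ultrafilter W) :=
    ⟨Ultrafilter.pure_injective, fun u => (u.eq_pure_of_finite.imp fun _ => Eq.symm)⟩
  let e : W ≃[Language.graph] Ultrafilter W :=
    { toEquiv := Equiv.ofBijective pure hpure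
      map_fun' := fun f _ => isEmptyElim f
      map_rel' := by
        rintro _ ⟨⟩ x
        exact ueRel_pure_pure_iff R }
  exact StrongHomClass.elementarilyEquivalent e

theorem ueRel_self_of_le_cofinite [Std.Trichotomous R] {u : Ultrafilter W}
    (hu : (u : Filter W) ≤ cofinite) : ueRel R u u := by
  intro X hX
  set M := {x ∈ X | ∀ y ∈ X, ¬ R x y}
  have hM : M.Subsingleton := fun a ha b hb =>
    Std.Trichotomous.trichotomous a b (ha.2 b hb.1) (hb.2 a ha.1)
  filter_upwards [hX, hu hM.finite.compl_mem_cofinite] with x hxX hxM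
  by_contra hx
  exact hxM ⟨hxX, fun y hy hxy => hx ⟨y, hy, hxy⟩⟩

theorem exists_ueRel_self [Infinite W] [Std.Trichotomous R] :
    ∃ u : Ultrafilter W, ueRel R u u :=
  ⟨.of cofinite, ueRel_self_of_le_cofinite R (Ultrafilter.of_le _)⟩

end UltrafilterExtension

theorem not_elementarilyEquivalent_of_irrefl {V V' : Type*} (R : V → V → Prop)
    (S : V' → V' → Prop) [Std.Irrefl R] {b : V'} (hb : S b b) :
    ¬ (letI := grStruct R
       letI := grStruct S
       Language.graph.ElementarilyEquivalent V V') := by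
  let := grStruct R
  let := grStruct S
  intro h
  have hV : V ⊨ Relations.irreflexive Language.adj :=
    Relations.realize_irreflexive.2 ‹Std.Irrefl R›
  exact (Relations.realize_irreflexive.1 (h.realize_sentence _ |>.1 hV)).irrefl b hb

namespace UltraprodChains

variable {D : Ultrafilter ℕ}

theorem ltUltraprodChains_iff {x y : UltraprodChains D} :
    ltUltraprodChains D x y ↔ x.1 < y.1 :=
  Iff.of_eq (congrFun₂ Filter.Germ.lt_def x.1 y.1).symm

instance : Std.Irrefl (ltUltraprodChains D) :=
  ⟨fun x => ltUltraprodChains_iff.not.2 (lt_irrefl x.1)⟩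

instance : Std.Trichotomous (ltUltraprodChains D) :=
  ⟨fun _ _ hxy hyx => Subtype.ext <| (not_lt.1 (ltUltraprodChains_iff.not.1 hyx)).antisymm
    (not_lt.1 (ltUltraprodChains_iff.not.1 hxy))⟩

def const (hD : (D : Filter ℕ) ≤ cofinite) (k : ℕ) : UltraprodChains D :=
  ⟨k, Filter.Germ.liftRel_coe.2 <| hD <| Nat.cofinite_eq_atTop ▸ eventually_gt_atTop k⟩

theorem infinite_of_le_cofinite (hD : (D : Filter ℕ) ≤ cofinite) :
    Infinite (UltraprodChains D) :=
  Infinite.of_injective (const hD) fun _ _ h => Filter.Germ.const_inj.1 (congrArg Subtype.val h)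

end UltraprodChains

/-- each finite chain `⟨n,<⟩` is elementarily equivalent to its ultrafilter
extension, and for a nonprincipal `D` their ultraproduct `⟨P,<*⟩` is irreflexive while its
ultrafilter extension has a reflexive point; hence `⟨P,<*⟩` is not elementarily equivalent
to its ultrafilter extension, so the class `{𝔉 : 𝔉 ≡ 𝔉^ue}` is not closed under
ultraproducts. -/
theorem stmt_17 (D : Ultrafilter ℕ) (hD : ∀ n : ℕ, D ≠ pure n) :
    (∀ n : ℕ,
      letI := grStruct (· < · : Fin n → Fin n → Prop)
      letI := grStruct (ueRel (· < · : Fin n → Fin n → Prop))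
      Language.graph.ElementarilyEquivalent (Fin n) (Ultrafilter (Fin n))) ∧
    (∀ x : UltraprodChains D, ¬ ltUltraprodChains D x x) ∧
    (∃ u : Ultrafilter (UltraprodChains D), ueRel (ltUltraprodChains D) u u) ∧
    ¬ (letI := grStruct (ltUltraprodChains D)
       letI := grStruct (ueRel (ltUltraprodChains D))
       Language.graph.ElementarilyEquivalent (UltraprodChains D)
         (Ultrafilter (UltraprodChains D))) := by
  have hD' : (D : Filter ℕ) ≤ cofinite :=
    D.le_cofinite_or_eq_pure.resolve_right (not_exists.2 hD)
  have := UltraprodChains.infinite_of_le_cofinite hD'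
  obtain ⟨u, hu⟩ := exists_ueRel_self (ltUltraprodChains D)
  exact ⟨fun n => elementarilyEquivalent_ultrafilter_of_finite _, irrefl, ⟨u, hu⟩,
    not_elementarilyEquivalent_of_irrefl _ _ hu⟩
end
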